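/- Every context adaptive BWT is invertible: fix a finite alphabet Σ, a context adaptive ordering (π_x), and n ≥ 1. If s and t are primitive strings of length n over Σ such that BWT_*(s) = BWT_*(t) and #{u : u is a rotation of s with u ≺ s} = #{u : u is a rotation of t with u ≺ t} (i.e., s and t occupy the same row index in their respective sorted rotation matrices), then s = t. -/

import Mathlib

/-!
The rows of `M_*(s)` are the rotations of `s`, strictly sorted by `≺`, and `≺` survives
truncation: if `u ≺ v` then the length-`m` prefixes of `u` and `v` are equal or in the same
order. As the rows are closed under rotation, the length-`(m+1)` prefixes of the rows are, as a
multiset, the words `L[k] :: p k`, where `p k` is the length-`m` prefix of row `k`; sorting them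
recovers the first `m + 1` columns of `M_*(s)` from `L` and the first `m` columns. By induction
`L` determines `M_*(s)`, and the row index of `s` picks `s` out of it.
-/

open scoped Classical

variable {A : Type*}

/-- Longest common prefix of two lists. -/
def lcp [DecidableEq A] : List A → List A → List A
  | a :: as, b :: bs => if a = b then a :: lcp as bs else []
  | _, _ => []

/-- A string is primitive if its cyclic rotations are pairwise distinct. -/
def Primitive (s : List A) : Prop :=
  ∀ i j, i < s.length → j < s.length → s.rotate i = s.rotate j → i = j

/-- The context-adaptive comparison relation on rotations. -/
def Prec [DecidableEq A] (π : List A → A → A → Prop) (u v : List A) : Prop :=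
  ∃ a b, u[(lcp u v).length]? = some a ∧ v[(lcp u v).length]? = some b ∧
    π (lcp u v) a b

/-- `rank π s i` is the row index of the rotation `s.rotate i` in the sorted
rotation matrix `M_*(s)`, i.e. the number of rotations that `≺`-precede it. -/
noncomputable def rank [DecidableEq A] (π : List A → A → A → Prop)
    (s : List A) (i : ℕ) : ℕ :=
  ((Finset.range s.length).filter
    (fun j => Prec π (s.rotate j) (s.rotate i))).card

/-- `bwtStar π s` is the string `L = BWT_*(s)`: the rotation indices sorted by
their rank (i.e. by `≺`), each mapped to the last symbol of its rotation. -/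
noncomputable def bwtStar [DecidableEq A] (π : List A → A → A → Prop)
    (s : List A) : List A :=
  ((List.range s.length).mergeSort
      (fun i j => rank π s i ≤ rank π s j)).filterMap
    (fun i => (s.rotate i).getLast?)

theorem eq_append_cons_of_prefix {x u : List A} (h : x <+: u) {a : A}
    (ha : u[x.length]? = some a) : u = x ++ a :: u.drop (x.length + 1) := by
  obtain ⟨w, rfl⟩ := h
  cases w with
  | nil => simp at ha
  | cons c w => simp_all

section Prec
variable [DecidableEq A] {π : List A → A → A → Prop}

theorem lcp_isPrefix (u v : List A) : lcp u v <+: u ∧ lcp u v <+: v := by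
  induction u generalizing v with
  | nil => simp [lcp]
  | cons a u ih =>
    cases v with
    | nil => simp [lcp]
    | cons b v =>
      by_cases hab : a = b
      · subst hab
        simpa [lcp] using ih v
      · simp [lcp, hab]

theorem lcp_self (u : List A) : lcp u u = u := by
  induction u with
  | nil => rfl
  | cons a u ih => simp [lcp, ih]

theorem lcp_append_cons (x : List A) {a b : A} (u v : List A) (hab : a ≠ b) :
    lcp (x ++ a :: u) (x ++ b :: v) = x := by
  induction x with
  | nil => simp [lcp, hab]
  | cons c x ih => simp [lcp, ih]

theorem prec_append_cons_iff {x u v : List A} {a b : A} (hab : a ≠ b) :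
    Prec π (x ++ a :: u) (x ++ b :: v) ↔ π x a b := by
  simp [Prec, lcp_append_cons x u v hab]

theorem Prec.exists_eq_append_cons {u v : List A} (h : Prec π u v) :
    ∃ x a b u₁ v₁, u = x ++ a :: u₁ ∧ v = x ++ b :: v₁ ∧ π x a b := by
  obtain ⟨a, b, ha, hb, hab⟩ := h
  exact ⟨lcp u v, a, b, _, _, eq_append_cons_of_prefix (lcp_isPrefix u v).1 ha,
    eq_append_cons_of_prefix (lcp_isPrefix u v).2 hb, hab⟩

theorem exists_eq_append_cons_of_ne {u v : List A} (hlen : u.length = v.length)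
    (hne : u ≠ v) : ∃ x a b u₁ v₁, u = x ++ a :: u₁ ∧ v = x ++ b :: v₁ ∧ a ≠ b := by
  induction u generalizing v with
  | nil => cases v <;> simp_all
  | cons a u ih =>
    cases v with
    | nil => simp at hlen
    | cons b v =>
      by_cases hab : a = b
      · subst hab
        obtain ⟨x, c, d, u₁, v₁, rfl, rfl, hcd⟩ :=
          ih (by simpa using hlen) (by rintro rfl; exact hne rfl)
        exact ⟨a :: x, c, d, u₁, v₁, rfl, rfl, hcd⟩
      · exact ⟨[], a, b, u, v, rfl, rfl, hab⟩

theorem prec_irrefl (u : List A) : ¬ Prec π u u := by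
  rintro ⟨a, b, ha, -, -⟩
  simp [lcp_self] at ha

section StrictOrder
variable (hπ : ∀ x, IsStrictOrder A (π x))
include hπ

theorem prec_append_cons {x u v : List A} {a b : A} (h : π x a b) :
    Prec π (x ++ a :: u) (x ++ b :: v) :=
  (prec_append_cons_iff (by rintro rfl; exact (hπ x).irrefl a h)).2 h

theorem prec_asymm {u v : List A} (h : Prec π u v) : ¬ Prec π v u := by
  obtain ⟨x, a, b, u₁, v₁, rfl, rfl, hab⟩ := h.exists_eq_append_cons
  have hne : b ≠ a := fun h => (hπ x).irrefl a (h ▸ hab)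
  rw [prec_append_cons_iff hne]
  exact fun hba => (hπ x).irrefl a ((hπ x).trans _ _ _ hab hba)

theorem prec_trans {u v w : List A} (huv : Prec π u v) (hvw : Prec π v w) :
    Prec π u w := by
  obtain ⟨x, a, b, u₁, v₁, rfl, hv, hab⟩ := huv.exists_eq_append_cons
  obtain ⟨y, b', c, v₂, w₁, hv', rfl, hbc⟩ := hvw.exists_eq_append_cons
  rcases List.append_eq_append_iff.1 (hv.symm.trans hv') with
    ⟨_ | ⟨d, z⟩, rfl, hz⟩ | ⟨_ | ⟨d, z⟩, rfl, hz⟩ <;>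
    simp only [List.nil_append, List.cons_append, List.cons.injEq] at hz
  · obtain ⟨rfl, -⟩ := hz
    simp only [List.append_nil] at hbc ⊢
    exact prec_append_cons hπ ((hπ x).trans _ _ _ hab hbc)
  · obtain ⟨rfl, -⟩ := hz
    simpa using prec_append_cons (u := u₁) (v := z ++ c :: w₁) hπ hab
  · obtain ⟨rfl, -⟩ := hz
    simp only [List.append_nil] at hab ⊢
    exact prec_append_cons hπ ((hπ y).trans _ _ _ hab hbc)
  · obtain ⟨rfl, -⟩ := hz
    simpa using prec_append_cons (u := z ++ a :: u₁) (v := w₁) hπ hbc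

theorem Prec.take {u v : List A} (h : Prec π u v) (m : ℕ) :
    Relation.ReflGen (Prec π) (u.take m) (v.take m) := by
  obtain ⟨x, a, b, u₁, v₁, rfl, rfl, hab⟩ := h.exists_eq_append_cons
  by_cases hm : m ≤ x.length
  · simp [List.take_append_of_le_length hm, Relation.ReflGen.refl]
  · have htake : ∀ (c : A) (l : List A),
        (x ++ c :: l).take m = x ++ c :: l.take (m - x.length - 1) := by
      intro c l
      rw [List.take_append, List.take_of_length_le (by omega),
        show m - x.length = m - x.length - 1 + 1 by omega, List.take_succ_cons]
      simp
    rw [htake, htake]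
    exact .single (prec_append_cons hπ hab)

end StrictOrder

theorem prec_or_prec_of_ne (hπ : ∀ x, IsStrictTotalOrder A (π x)) {u v : List A}
    (hlen : u.length = v.length) (hne : u ≠ v) : Prec π u v ∨ Prec π v u := by
  obtain ⟨x, a, b, u₁, v₁, rfl, rfl, hab⟩ := exists_eq_append_cons_of_ne hlen hne
  rw [prec_append_cons_iff hab, prec_append_cons_iff hab.symm]
  by_contra! h
  exact hab ((hπ x).trichotomous a b h.1 h.2)

end Prec

theorem countP_rel_getElem_of_pairwise {α : Type*} {R : α → α → Prop}
    (hR : ∀ a b, R a b → ¬ R b a) {l : List α} (hl : l.Pairwise R) (k : ℕ)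
    (hk : k < l.length) : l.countP (fun y => R y l[k]) = k := by
  have hsplit : l = l.take k ++ l[k] :: l.drop (k + 1) := by
    rw [← List.drop_eq_getElem_cons, List.take_append_drop]
  have hl' := hsplit ▸ hl
  rw [List.pairwise_append, List.pairwise_cons] at hl'
  obtain ⟨-, ⟨hafter, -⟩, hbefore⟩ := hl'
  generalize l[k] = x at hsplit hbefore hafter ⊢
  rw [hsplit, List.countP_append, List.countP_cons,
    List.countP_eq_length.2 fun y hy => decide_eq_true (hbefore y hy _ List.mem_cons_self),
    List.countP_eq_zero.2 fun y hy => by simpa using hR _ _ (hafter y hy)]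
  simpa [hk.le] using fun h => hR x x h h

section Rank
variable [DecidableEq A] {π : List A → A → A → Prop} {s : List A}

theorem rank_eq_countP (i : ℕ) :
    rank π s i = ((List.range s.length).map s.rotate).countP
      (fun r => Prec π r (s.rotate i)) := by
  rw [rank, Finset.card_def, Finset.filter_val, ← Multiset.countP_eq_card_filter,
    List.countP_map]
  rfl

theorem rank_lt_rank (hπ : ∀ x, IsStrictOrder A (π x)) {i j : ℕ} (hi : i < s.length)
    (h : Prec π (s.rotate i) (s.rotate j)) : rank π s i < rank π s j := by
  refine Finset.card_lt_card ⟨fun k hk => ?_, fun hsub => ?_⟩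
  · simp only [Finset.mem_filter] at hk ⊢
    exact ⟨hk.1, prec_trans hπ hk.2 h⟩
  · have := hsub (Finset.mem_filter.2 ⟨Finset.mem_range.2 hi, h⟩)
    exact prec_irrefl _ (Finset.mem_filter.1 this).2

theorem prec_of_rank_le (hπ : ∀ x, IsStrictTotalOrder A (π x)) (hs : Primitive s)
    {i j : ℕ} (hi : i < s.length) (hj : j < s.length) (hij : i ≠ j)
    (h : rank π s i ≤ rank π s j) : Prec π (s.rotate i) (s.rotate j) := by
  refine (prec_or_prec_of_ne hπ (by simp) fun he => hij (hs i j hi hj he)).resolve_right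
    fun hji => ?_
  exact (rank_lt_rank (fun x => (hπ x).toIsStrictOrder) hj hji).not_ge h

end Rank

theorem perm_map_range_succ {α : Type*} {f : ℕ → α} {n : ℕ} (h : f n = f 0) :
    ((List.range n).map fun i => f (i + 1)).Perm ((List.range n).map f) := by
  cases n with
  | zero => simp
  | succ k =>
    have hshift : (List.range (k + 1)).map (fun i => f (i + 1)) =
        (List.range k).map (fun i => f (i + 1)) ++ [f 0] := by
      simp [List.range_succ, h]
    rw [hshift, List.range_succ_eq_map, List.map_cons, List.map_map]
    exact List.perm_append_singleton _ _

theorem map_eq_map_some_filterMap {α β : Type*} {f : α → Option β} {l : List α}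
    (h : ∀ x ∈ l, (f x).isSome) : l.map f = (l.filterMap f).map some := by
  induction l with
  | nil => rfl
  | cons x l ih =>
    obtain ⟨b, hb⟩ := Option.isSome_iff_exists.1 (h x List.mem_cons_self)
    simp [hb, ih fun y hy => h y (List.mem_cons_of_mem _ hy)]

theorem map_eq_map_of_map_eq_of_map_eq {α β γ δ : Type*} {l₁ l₂ : List α} {f : α → β}
    {g : α → γ} (h : β → γ → δ) (hf : l₁.map f = l₂.map f) (hg : l₁.map g = l₂.map g) :
    l₁.map (fun x => h (f x) (g x)) = l₂.map (fun x => h (f x) (g x)) := by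
  have hzip : ∀ l : List α, l.map (fun x => h (f x) (g x)) =
      ((l.map f).zip (l.map g)).map fun p => h p.1 p.2 := by
    simp [List.zip_map', List.map_map, Function.comp_def]
  rw [hzip, hzip, hf, hg]

theorem take_succ_eq_getLast?_rotate_one {r : List A} {m : ℕ} (hm : m < r.length) :
    (r.rotate 1).getLast?.toList ++ (r.rotate 1).take m = r.take (m + 1) := by
  cases r with
  | nil => simp at hm
  | cons a z =>
    have hmz : m ≤ z.length := by simpa using hm
    simp [List.rotate_cons_succ, List.take_append_of_le_length hmz]

section RotationMatrix
variable [DecidableEq A] {π : List A → A → A → Prop}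

/-- The properties of `M_*(s)` that make it determined by its last column. -/
structure IsRotationMatrix (π : List A → A → A → Prop) (n : ℕ) (R : List (List A)) : Prop where
  length_eq : ∀ r ∈ R, r.length = n
  map_rotate_one_perm : (R.map (·.rotate 1)).Perm R
  pairwise_prec : R.Pairwise (Prec π)

variable {n : ℕ} {R R₁ R₂ : List (List A)}

theorem IsRotationMatrix.map_take_length (h : IsRotationMatrix π n R) :
    R.map (·.take n) = R := by
  conv_rhs => rw [← List.map_id R]
  exact List.map_congr_left fun r hr => List.take_of_length_le (h.length_eq r hr).le

theorem IsRotationMatrix.perm_map_take_succ (h : IsRotationMatrix π n R) {m : ℕ}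
    (hm : m < n) :
    (R.map (·.take (m + 1))).Perm (R.map fun r => r.getLast?.toList ++ r.take m) := by
  have hcol : R.map (·.take (m + 1)) =
      (R.map (·.rotate 1)).map fun r => r.getLast?.toList ++ r.take m := by
    rw [List.map_map]
    exact List.map_congr_left fun r hr =>
      (take_succ_eq_getLast?_rotate_one (h.length_eq r hr ▸ hm)).symm
  rw [hcol]
  exact h.map_rotate_one_perm.map _

theorem IsRotationMatrix.map_getLast? (h : IsRotationMatrix π n R) (hn : 0 < n) :
    R.map List.getLast? = (R.filterMap List.getLast?).map some :=
  map_eq_map_some_filterMap fun r hr => by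
    simpa [List.getLast?_isSome, ← List.length_pos_iff] using (h.length_eq r hr).symm ▸ hn

theorem reflGen_prec_antisymm (hπ : ∀ x, IsStrictOrder A (π x)) {u v : List A}
    (huv : Relation.ReflGen (Prec π) u v) (hvu : Relation.ReflGen (Prec π) v u) :
    u = v := by
  rcases huv with _ | huv
  · rfl
  rcases hvu with _ | hvu
  · rfl
  exact absurd hvu (prec_asymm hπ huv)

theorem IsRotationMatrix.eq_of_map_getLast?_eq (hπ : ∀ x, IsStrictOrder A (π x))
    (h₁ : IsRotationMatrix π n R₁) (h₂ : IsRotationMatrix π n R₂)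
    (hlast : R₁.map List.getLast? = R₂.map List.getLast?) : R₁ = R₂ := by
  have hcol : ∀ m ≤ n, R₁.map (·.take m) = R₂.map (·.take m) := by
    intro m hm
    induction m with
    | zero =>
      have hlen : R₁.length = R₂.length := by simpa using congrArg List.length hlast
      simpa [List.map_const'] using hlen
    | succ m ih =>
      have hsorted : ∀ {R}, IsRotationMatrix π n R →
          (R.map (·.take (m + 1))).Pairwise (Relation.ReflGen (Prec π)) :=
        fun h => h.pairwise_prec.map _ fun u v huv => huv.take hπ (m + 1)
      refine List.Perm.eq_of_pairwise (fun _ _ _ _ => reflGen_prec_antisymm hπ)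
        (hsorted h₁) (hsorted h₂) ?_
      have hF := map_eq_map_of_map_eq_of_map_eq (fun c p => c.toList ++ p) hlast (ih (by omega))
      exact (h₁.perm_map_take_succ hm).trans (hF ▸ (h₂.perm_map_take_succ hm).symm)
  rw [← h₁.map_take_length, ← h₂.map_take_length, hcol n le_rfl]

end RotationMatrix

section SortedRotations
variable [DecidableEq A] {π : List A → A → A → Prop} {s : List A}

/-- The rows of the matrix `M_*(s)`, in order. -/
noncomputable def sortedRotations (π : List A → A → A → Prop) (s : List A) : List (List A) :=
  ((List.range s.length).mergeSort (fun i j => rank π s i ≤ rank π s j)).map s.rotate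

theorem bwtStar_eq_filterMap_sortedRotations :
    bwtStar π s = (sortedRotations π s).filterMap List.getLast? := by
  rw [bwtStar, sortedRotations, List.filterMap_map]
  rfl

theorem sortedRotations_perm :
    (sortedRotations π s).Perm ((List.range s.length).map s.rotate) :=
  (List.mergeSort_perm _ _).map _

theorem pairwise_prec_sortedRotations (hπ : ∀ x, IsStrictTotalOrder A (π x))
    (hs : Primitive s) : (sortedRotations π s).Pairwise (Prec π) := by
  have hsorted := List.pairwise_mergeSort
    (le := fun i j => decide (rank π s i ≤ rank π s j))
    (fun _ _ _ hab hbc => by simp only [decide_eq_true_eq] at *; exact hab.trans hbc)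
    (fun a b => by simpa using le_total _ _) (List.range s.length)
  have hnodup : ((List.range s.length).mergeSort
      fun i j => decide (rank π s i ≤ rank π s j)).Nodup :=
    List.nodup_mergeSort.2 List.nodup_range
  rw [sortedRotations, List.pairwise_map]
  refine (hsorted.and hnodup).imp_of_mem fun hi hj hij =>
    prec_of_rank_le hπ hs ?_ ?_ hij.2 (by simpa using hij.1)
  · simpa using (List.mergeSort_perm _ _).subset hi
  · simpa using (List.mergeSort_perm _ _).subset hj

theorem isRotationMatrix_sortedRotations (hπ : ∀ x, IsStrictTotalOrder A (π x))
    (hs : Primitive s) : IsRotationMatrix π s.length (sortedRotations π s) where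
  length_eq r hr := by
    obtain ⟨i, -, rfl⟩ := List.mem_map.1 (sortedRotations_perm.subset hr)
    exact List.length_rotate s i
  map_rotate_one_perm :=
    calc ((sortedRotations π s).map (·.rotate 1)).Perm
          (((List.range s.length).map s.rotate).map (·.rotate 1)) :=
          sortedRotations_perm.map _
      _ = (List.range s.length).map fun i => s.rotate (i + 1) := by
          simp [List.map_map, Function.comp_def, List.rotate_rotate]
      List.Perm _ ((List.range s.length).map s.rotate) := perm_map_range_succ (by simp)
      List.Perm _ (sortedRotations π s) := sortedRotations_perm.symm
  pairwise_prec := pairwise_prec_sortedRotations hπ hs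

theorem getElem?_sortedRotations_rank_zero (hπ : ∀ x, IsStrictTotalOrder A (π x))
    (hs : Primitive s) (hne : s ≠ []) : (sortedRotations π s)[rank π s 0]? = some s := by
  have hmem : s ∈ sortedRotations π s :=
    sortedRotations_perm.mem_iff.2
      (List.mem_map.2 ⟨0, List.mem_range.2 (List.length_pos_iff.2 hne), List.rotate_zero s⟩)
  obtain ⟨k, hk, hks⟩ := List.getElem_of_mem hmem
  have hrank : rank π s 0 = k := by
    have hcount := countP_rel_getElem_of_pairwise
      (fun _ _ => prec_asymm fun x => (hπ x).toIsStrictOrder)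
      (pairwise_prec_sortedRotations hπ hs) k hk
    rw [hks] at hcount
    rwa [rank_eq_countP, List.rotate_zero, ← sortedRotations_perm.countP_eq]
  rw [hrank, List.getElem?_eq_getElem hk, hks]

end SortedRotations

theorem stmt6_general [DecidableEq A]
    (π : List A → A → A → Prop) (hπ : ∀ x, IsStrictTotalOrder A (π x))
    (n : ℕ) (hn : 1 ≤ n)
    (s t : List A) (hslen : s.length = n) (htlen : t.length = n)
    (hsprim : Primitive s) (htprim : Primitive t)
    (hbwt : bwtStar π s = bwtStar π t)
    (hrow : ((Finset.range s.length).filter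
              (fun i => Prec π (s.rotate i) s)).card =
            ((Finset.range t.length).filter
              (fun i => Prec π (t.rotate i) t)).card) :
    s = t := by
  have hs := isRotationMatrix_sortedRotations hπ hsprim
  have ht := isRotationMatrix_sortedRotations hπ htprim
  rw [hslen] at hs
  rw [htlen] at ht
  have hrows : sortedRotations π s = sortedRotations π t := by
    refine hs.eq_of_map_getLast?_eq (fun x => (hπ x).toIsStrictOrder) ht ?_
    rw [hs.map_getLast? hn, ht.map_getLast? hn, ← bwtStar_eq_filterMap_sortedRotations,
      ← bwtStar_eq_filterMap_sortedRotations, hbwt]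
  have hrank : rank π s 0 = rank π t 0 := by simpa only [rank, List.rotate_zero] using hrow
  have hs0 := getElem?_sortedRotations_rank_zero hπ hsprim (List.ne_nil_of_length_pos (by omega))
  rw [hrows, hrank, getElem?_sortedRotations_rank_zero hπ htprim
    (List.ne_nil_of_length_pos (by omega))] at hs0
  exact (Option.some.inj hs0).symm

/-- every context adaptive BWT is invertible: if two primitive
strings of the same length `n ≥ 1` have the same transform `BWT_*` and occupy
the same row index in their respective sorted rotation matrices, then they are
equal.  (Note `s = s.rotate 0`, so `rank π s 0` is the row index of `s`.) -/
theorem stmt6 [Fintype A] [DecidableEq A]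
    (π : List A → A → A → Prop) (hπ : ∀ x, IsStrictTotalOrder A (π x))
    (n : ℕ) (hn : 1 ≤ n)
    (s t : List A) (hslen : s.length = n) (htlen : t.length = n)
    (hsprim : Primitive s) (htprim : Primitive t)
    (hbwt : bwtStar π s = bwtStar π t)
    (hrow : ((Finset.range s.length).filter
              (fun i => Prec π (s.rotate i) s)).card =
            ((Finset.range t.length).filter
              (fun i => Prec π (t.rotate i) t)).card) :
    s = t :=
  stmt6_general π hπ n hn s t hslen htlen hsprim htprim hbwt hrow
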